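/- Failure of the unquantified 4-schema with non-rigid constants: there exists a term-modal Kripke model M with all accessibility relations transitive, a world w, a valuation v, a constant c and a constant b such that M, w ⊨_v K_c (b = c) but M, w ⊭_v K_c K_c (b = c). -/
import Mathlib


/-- Terms of a term-modal signature: variables and (non-rigid) constants. -/
inductive Term where
  | var (x : ℕ)
  | con (c : ℕ)
deriving DecidableEq

/-- Sorts: agent, object, or unrestricted. -/
inductive Srt where
  | agt | obj | any
deriving DecidableEq

/-- Term-modal formulas, including dynamic modalities `box` for (unbundled)
    action models `(E, Q, pre, post)` pointed at event `e`. -/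
inductive Form where
  | rel (r : ℕ) (ts : List Term)
  | eq (t₁ t₂ : Term)
  | neg (φ : Form)
  | and (φ ψ : Form)
  | know (t : Term) (φ : Form)
  | all (s : Srt) (x : ℕ) (φ : Form)
  | box (E : List ℕ) (Q : ℕ → ℕ → Form) (pre : ℕ → Form)
        (post : ℕ → ℕ → List Term → Form) (e : ℕ) (φ : Form)

def Form.imp (φ ψ : Form) : Form := .neg (.and φ (.neg ψ))
def Form.top : Form := .eq (.con 0) (.con 0)
def Form.bot : Form := .neg .top
def Form.or (φ ψ : Form) : Form := .neg (.and (.neg φ) (.neg ψ))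
def Form.iff (φ ψ : Form) : Form := .and (φ.imp ψ) (ψ.imp φ)
def Form.exs (s : Srt) (x : ℕ) (φ : Form) : Form := .neg (.all s x (.neg φ))
def bigAnd (l : List Form) : Form := l.foldr .and .top
def bigOr (l : List Form) : Form := l.foldr .or .bot

/-- The designated free variable of edge-conditions. -/
def xstar : ℕ := 0

def Term.isGround : Term → Prop
  | .var _ => False
  | .con _ => True

/-- A term-modal Kripke model with two-sorted domain `D` (agents `agt`, objects the rest),
    worlds `W`, accessibility map `R`, and world-relative interpretation of constants and
    relation symbols. -/
structure Model (D W : Type) where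
  agt : Set D
  R : D → W → W → Prop
  Icon : ℕ → W → D
  Irel : ℕ → W → List D → Prop

def Model.srt {D W : Type} (M : Model D W) : Srt → Set D
  | .agt => M.agt
  | .obj => M.agtᶜ
  | .any => Set.univ

/-- Extension of a term at a world under a (rigid) valuation. -/
def den {D W : Type} (M : Model D W) (v : ℕ → D) (w : W) : Term → D
  | .var x => v x
  | .con c => M.Icon c w

/-- Satisfaction; the `box` clause builds the product update inline. -/
def Sat : {D W : Type} → Model D W → Form → W → (ℕ → D) → Prop
  | _, _, M, .rel r ts, w, v => M.Irel r w (ts.map (den M v w))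
  | _, _, M, .eq t₁ t₂, w, v => den M v w t₁ = den M v w t₂
  | _, _, M, .neg φ, w, v => ¬ Sat M φ w v
  | _, _, M, .and φ ψ, w, v => Sat M φ w v ∧ Sat M ψ w v
  | _, _, M, .know t φ, w, v => ∀ w', M.R (den M v w t) w w' → Sat M φ w' v
  | _, _, M, .all s x φ, w, v => ∀ d ∈ M.srt s, Sat M φ w (Function.update v x d)
  | D, W, M, .box E Q pre post e φ, w, v =>
      Sat M (pre e) w v →
      Sat (D := D) (W := W × ℕ)
        { agt := M.agt
        , R := fun i p q => q.2 ∈ E ∧ M.R i p.1 q.1 ∧ Sat M (pre q.2) q.1 v ∧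
            Sat M (Q p.2 q.2) p.1 (Function.update v xstar i)
        , Icon := fun c p => M.Icon c p.1
        , Irel := fun r p ds =>
            (M.Irel r p.1 ds ∨ ∃ ts : List Term, (∀ t ∈ ts, t.isGround) ∧
               ts.map (den M v p.1) = ds ∧ Sat M (post p.2 r ts) p.1 v) ∧
            ¬ ∃ ts : List Term, (∀ t ∈ ts, t.isGround) ∧
               ts.map (den M v p.1) = ds ∧ ¬ Sat M (post p.2 r ts) p.1 v }
        φ (w, e) v
/-- A (pointed-able) action model: finite event list `E`, edge-conditions `Q`
    (with designated free variable `xstar`), preconditions and postconditions. -/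
structure ActM where
  E : List ℕ
  Q : ℕ → ℕ → Form
  pre : ℕ → Form
  post : ℕ → ℕ → List Term → Form

/-- Dynamic modality for a bundled action model. -/
def Form.Box (A : ActM) (e : ℕ) (φ : Form) : Form :=
  .box A.E A.Q A.pre A.post e φ

/-- A term-modal frame: two-sorted domain and accessibility map. -/
structure Frame (D W : Type) where
  agt : Set D
  R : D → W → W → Prop

def Frame.model {D W : Type} (F : Frame D W) (Ic : ℕ → W → D)
    (Ir : ℕ → W → List D → Prop) : Model D W :=
  ⟨F.agt, F.R, Ic, Ir⟩

/-- Validity of a formula on a frame: true at every world of every model based on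
    the frame, under every valuation. -/
def ValidOn {D W : Type} (F : Frame D W) (φ : Form) : Prop :=
  ∀ (Ic : ℕ → W → D) (Ir : ℕ → W → List D → Prop) (w : W) (v : ℕ → D),
    Sat (F.model Ic Ir) φ w v

def Term.fvT : Term → Set ℕ
  | .var x => {x}
  | .con _ => ∅

/-- Free variables of a formula. -/
def Form.fv : Form → Set ℕ
  | .rel _ ts => ⋃ t ∈ ts, t.fvT
  | .eq t₁ t₂ => t₁.fvT ∪ t₂.fvT
  | .neg φ => φ.fv
  | .and φ ψ => φ.fv ∪ ψ.fv
  | .know t φ => t.fvT ∪ φ.fv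
  | .all _ x φ => φ.fv \ {x}
  | .box E Q pre post _ φ =>
      φ.fv ∪ (⋃ e₁ ∈ E, ⋃ e₂ ∈ E, (Q e₁ e₂).fv \ {xstar}) ∪
      (⋃ e' ∈ E, (pre e').fv) ∪ (⋃ e' ∈ E, ⋃ r : ℕ, ⋃ ts : List Term, (post e' r ts).fv)

def Term.substT (x : ℕ) (u : Term) : Term → Term
  | .var y => if y = x then u else .var y
  | .con c => .con c

/-- Substitution of the term `u` for the free variable `x`. -/
def Form.subst (x : ℕ) (u : Term) : Form → Form
  | .rel r ts => .rel r (ts.map (Term.substT x u))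
  | .eq t₁ t₂ => .eq (t₁.substT x u) (t₂.substT x u)
  | .neg φ => .neg (φ.subst x u)
  | .and φ ψ => .and (φ.subst x u) (ψ.subst x u)
  | .know t φ => .know (t.substT x u) (φ.subst x u)
  | .all s y φ => .all s y (if y = x then φ else φ.subst x u)
  | .box E Q pre post e φ =>
      .box E (fun a b => (Q a b).subst x u) (fun a => (pre a).subst x u)
        (fun a r ts => (post a r ts).subst x u) e (φ.subst x u)

/-- Composition of action models (events paired via `Nat.pair`). -/
noncomputable def ActM.comp (A₁ A₂ : ActM) : ActM where
  E := (A₁.E.product A₂.E).map fun p => Nat.pair p.1 p.2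
  Q := fun a b =>
    .and (A₁.Q (Nat.unpair a).1 (Nat.unpair b).1)
      (Form.Box A₁ (Nat.unpair a).1 (A₂.Q (Nat.unpair a).2 (Nat.unpair b).2))
  pre := fun a =>
    .and (A₁.pre (Nat.unpair a).1) (Form.Box A₁ (Nat.unpair a).1 (A₂.pre (Nat.unpair a).2))
  post := fun a r ts =>
    open Classical in
    if A₂.post (Nat.unpair a).2 r ts = .rel r ts then A₁.post (Nat.unpair a).1 r ts
    else Form.Box A₁ (Nat.unpair a).1 (A₂.post (Nat.unpair a).2 r ts)

/-- Complexity of action model components: supremum of complexities of all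
    preconditions, edge-conditions and postcondition formulas. -/
noncomputable def Form.c : Form → ℕ
  | .rel _ _ => 1
  | .eq _ _ => 1
  | .neg φ => 1 + φ.c
  | .and φ ψ => 1 + max φ.c ψ.c
  | .know _ φ => 1 + φ.c
  | .all _ _ φ => 1 + φ.c
  | .box E Q pre post _ φ =>
      (4 + sSup ({n | ∃ e' ∈ E, n = (pre e').c} ∪
                 {n | ∃ e₁ ∈ E, ∃ e₂ ∈ E, n = (Q e₁ e₂).c} ∪
                 {n | ∃ e' ∈ E, ∃ r : ℕ, ∃ ts : List Term, n = (post e' r ts).c})) * φ.c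

/-- Complexity of an action model. -/
noncomputable def ActM.c (A : ActM) : ℕ :=
  sSup ({n | ∃ e' ∈ A.E, n = (A.pre e').c} ∪
        {n | ∃ e₁ ∈ A.E, ∃ e₂ ∈ A.E, n = (A.Q e₁ e₂).c} ∪
        {n | ∃ e' ∈ A.E, ∃ r : ℕ, ∃ ts : List Term, n = (A.post e' r ts).c})

/-- Membership in the static language `L` (no action modalities). -/
def Form.IsStatic : Form → Prop
  | .rel _ _ => True
  | .eq _ _ => True
  | .neg φ => φ.IsStatic
  | .and φ ψ => φ.IsStatic ∧ ψ.IsStatic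
  | .know _ φ => φ.IsStatic
  | .all _ _ φ => φ.IsStatic
  | .box _ _ _ _ _ _ => False


/-- Failure of the unquantified 4-schema with non-rigid constants: there is a model with
    all (agent) accessibility relations transitive, a world, a valuation, and agent
    constants `b`, `c` such that `K_c (b = c)` holds but `K_c K_c (b = c)` fails. -/
theorem four_schema_fails_nonrigid :
    ∃ (D W : Type) (M : Model D W) (w : W) (v : ℕ → D) (b c : ℕ),
      (∀ α ∈ M.agt, Transitive (M.R α)) ∧
      (∀ u : W, M.Icon c u ∈ M.agt) ∧ (∀ u : W, M.Icon b u ∈ M.agt) ∧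
      Sat M (.know (.con c) (.eq (.con b) (.con c))) w v ∧
      ¬ Sat M (.know (.con c) (.know (.con c) (.eq (.con b) (.con c)))) w v := by
  
  refine ⟨Bool, ℕ,
    { agt := Set.univ
    , R := fun i p q => if i then (p = 1 ∧ q = 2) else (p = 0 ∧ q = 1)
    , Icon := fun n u => if n = 0 then true else decide (u = 1)
    , Irel := fun _ _ _ => False }, 0, fun _ => true, 0, 1, ?_, ?_, ?_, ?_, ?_⟩
  · rintro α - p q r hpq hqr
    rcases α <;> simp_all
  · intro u; trivial
  · intro u; trivial
  · intro w' hw'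
    simp only [Sat, den] at *
    simp at hw'
    simp [hw']
  · intro h
    have h1 := h 1 (by simp [den])
    have h2 := h1 2 (by simp [den])
    simp [Sat, den] at h2
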